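/- Let X be an n-valued group, x ∈ X, and r₁, …, r_k ≥ 1 natural numbers such that S*(x, r_i) ≠ ∅ for every i. Then S*(x, r₁ + ⋯ + r_k) ⊆ S*(x, r₁) * S*(x, r₂) * ⋯ * S*(x, r_k), where the right-hand side is the iterated product of subsets. -/
import Mathlib


/-- An `n`-valued group: multiplication takes values in `n`-element multisets. -/
structure NValuedGroup (n : ℕ) (X : Type*) where
  mul : X → X → Multiset X
  e : X
  inv : X → X
  one_le : 1 ≤ n
  card_mul : ∀ x y, (mul x y).card = n
  assoc : ∀ x y z, (mul x y).bind (fun t => mul t z) = (mul y z).bind (fun t => mul x t)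
  e_mul : ∀ x, mul e x = Multiset.replicate n x
  mul_e : ∀ x, mul x e = Multiset.replicate n x
  inv_mul : ∀ x, e ∈ mul (inv x) x
  mul_inv : ∀ x, e ∈ mul x (inv x)

variable {n : ℕ} {X : Type*}

/-- The multiset `x * s₁ * ⋯ * s_k` (iterated left-to-right, starting from `{x}`). -/
def NValuedGroup.wordProd (G : NValuedGroup n X) (x : X) (l : List X) : Multiset X :=
  l.foldl (fun m s => m.bind (fun t => G.mul t s)) {x}

/-- The ball `B_S(x, r)`: elements lying in `Set(x * s₁ * ⋯ * s_m)` for some `m ≤ r`,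
`s₁, …, s_m ∈ S`. -/
def NValuedGroup.ball (G : NValuedGroup n X) (S : Set X) (x : X) (r : ℕ) : Set X :=
  {y | ∃ l : List X, l.length ≤ r ∧ (∀ s ∈ l, s ∈ S) ∧ y ∈ G.wordProd x l}

/-- `S` generates `X`: every element lies in `Set(s₁ * ⋯ * s_m)` for some `m ≥ 1`,
`s₁, …, s_m ∈ S`. -/
def NValuedGroup.IsGenSet (G : NValuedGroup n X) (S : Set X) : Prop :=
  ∀ x : X, ∃ s₀ ∈ S, ∃ l : List X, (∀ s ∈ l, s ∈ S) ∧ x ∈ G.wordProd s₀ l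

/-- `G.spow x i` is the multivalued power `x^{*(i+1)}`; so `x^{*r} = G.spow x (r-1)` for `r ≥ 1`. -/
def NValuedGroup.spow (G : NValuedGroup n X) (x : X) : ℕ → Multiset X
  | 0 => {x}
  | r + 1 => (G.spow x r).bind (fun t => G.mul t x)

/-- `B*(x, r) = ⋃_{i=1}^{r} Set(x^{*i})`; in particular `B*(x, 0) = ∅`. -/
def NValuedGroup.Bstar (G : NValuedGroup n X) (x : X) (r : ℕ) : Set X :=
  {y | ∃ i < r, y ∈ G.spow x i}

/-- `S*(x, r) = B*(x, r) \ B*(x, r-1)`. -/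
def NValuedGroup.Sstar (G : NValuedGroup n X) (x : X) (r : ℕ) : Set X :=
  G.Bstar x r \ G.Bstar x (r - 1)

/-- Product of subsets: `U * V = ⋃_{u ∈ U, v ∈ V} Set(mul u v)`. -/
def NValuedGroup.setProd (G : NValuedGroup n X) (U V : Set X) : Set X :=
  {y | ∃ u ∈ U, ∃ v ∈ V, y ∈ G.mul u v}

/-- right-iterated powers starting from `u`. -/
def NValuedGroup.pw (G : NValuedGroup n X) (x u : X) : ℕ → Multiset X
  | 0 => {u}
  | j + 1 => (G.pw x u j).bind (fun t => G.mul t x)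

lemma NValuedGroup.pw_eq (G : NValuedGroup n X) (x u : X) (j : ℕ) :
    G.pw x u (j + 1) = (G.spow x j).bind (fun v => G.mul u v) := by
  induction j with
  | zero => simp [NValuedGroup.pw, NValuedGroup.spow]
  | succ j ih =>
    rw [NValuedGroup.pw, ih, Multiset.bind_assoc, NValuedGroup.spow, Multiset.bind_assoc]
    exact Multiset.bind_congr (fun v _ => G.assoc u v x)

lemma NValuedGroup.spow_add (G : NValuedGroup n X) (x : X) (i j : ℕ) :
    G.spow x (i + j) = (G.spow x i).bind (fun u => G.pw x u j) := by
  induction j with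
  | zero =>
    show G.spow x i = (G.spow x i).bind fun u => {u}
    exact ((Multiset.bind_singleton _ id).trans (Multiset.map_id _)).symm
  | succ j ih =>
    rw [← Nat.add_assoc, NValuedGroup.spow, ih, Multiset.bind_assoc]
    rfl

lemma NValuedGroup.mem_spow_add (G : NValuedGroup n X) (x u v y : X) (i j : ℕ)
    (hu : u ∈ G.spow x i) (hv : v ∈ G.spow x j) (hy : y ∈ G.mul u v) :
    y ∈ G.spow x (i + j + 1) := by
  have : i + j + 1 = i + (j + 1) := by omega
  rw [this, G.spow_add x i (j+1), Multiset.mem_bind]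
  exact ⟨u, hu, by rw [G.pw_eq, Multiset.mem_bind]; exact ⟨v, hv, hy⟩⟩

lemma NValuedGroup.sstar_add (G : NValuedGroup n X) (x : X) (a b : ℕ) (ha : 1 ≤ a) (hb : 1 ≤ b) :
    G.Sstar x (a + b) ⊆ G.setProd (G.Sstar x a) (G.Sstar x b) := by
  rintro y ⟨⟨m, hm, hym⟩, hy2⟩
  have hnot : ∀ i < a + b - 1, y ∉ G.spow x i := by
    intro i hi h
    exact hy2 ⟨i, hi, h⟩
  have hmeq : m = a + b - 1 := by
    rcases lt_or_ge m (a + b - 1) with h | h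
    · exact absurd hym (hnot m h)
    · omega
  subst hmeq
  have h1 : a + b - 1 = (a - 1) + (b - 1) + 1 := by omega
  have h2 : a + b - 1 = (a - 1) + ((b - 1) + 1) := by omega
  rw [h2] at hym
  rw [G.spow_add x (a-1) (b-1+1), Multiset.mem_bind] at hym
  obtain ⟨u, hu, hyu⟩ := hym
  rw [G.pw_eq, Multiset.mem_bind] at hyu
  obtain ⟨v, hv, hyv⟩ := hyu
  refine ⟨u, ⟨⟨a - 1, by omega, hu⟩, ?_⟩, v, ⟨⟨b - 1, by omega, hv⟩, ?_⟩, hyv⟩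
  · rintro ⟨i, hi, hui⟩
    exact hnot (i + (b - 1) + 1) (by omega) (G.mem_spow_add x u v y i (b-1) hui hv hyv)
  · rintro ⟨j, hj, hvj⟩
    exact hnot ((a - 1) + j + 1) (by omega) (G.mem_spow_add x u v y (a-1) j hu hvj hyv)

lemma NValuedGroup.setProd_mono_left (G : NValuedGroup n X) {U U' : Set X} (V : Set X)
    (h : U ⊆ U') : G.setProd U V ⊆ G.setProd U' V := by
  rintro y ⟨u, hu, v, hv, hy⟩; exact ⟨u, h hu, v, hv, hy⟩


/-- If `r₁, …, r_k ≥ 1` and every `S*(x, rᵢ)` is nonempty, then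
`S*(x, r₁ + ⋯ + r_k) ⊆ S*(x, r₁) * ⋯ * S*(x, r_k)` (iterated product of subsets,
left to right). Here the list of radii is `r₀ :: l`. -/
theorem sstar_sum_subset_prod (G : NValuedGroup n X) (x : X) (r₀ : ℕ) (l : List ℕ)
    (hpos : ∀ i ∈ r₀ :: l, 1 ≤ i) (hne : ∀ i ∈ r₀ :: l, (G.Sstar x i).Nonempty) :
    G.Sstar x (r₀ :: l).sum ⊆
      l.foldl (fun U i => G.setProd U (G.Sstar x i)) (G.Sstar x r₀) := by
  clear hne
  induction l using List.reverseRecOn with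
  | nil => simp
  | append_singleton l a ih =>
    have hsum : (r₀ :: (l ++ [a])).sum = (r₀ :: l).sum + a := by
      simp [List.sum_cons, List.sum_append]; ring
    rw [hsum, List.foldl_append]
    have h1 : 1 ≤ (r₀ :: l).sum := le_trans (hpos r₀ (by simp)) (List.single_le_sum (by simp) _ (by simp))
    have ha : 1 ≤ a := hpos a (by simp)
    refine (G.sstar_add x _ a h1 ha).trans ?_
    exact G.setProd_mono_left _ (ih (fun i hi => hpos i (by simp at hi ⊢; tauto)))
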